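/- Consider λ = √(s/k) in the corrupted-measurements decoder: let 1 ≤ s ≤ N, 1 ≤ k ≤ m ≤ N, and suppose A ∈ ℂ^{m×N} satisfies the Restricted Isometry Property for the sparse corruptions problem of order (2s, 2k) with constant δ_{2s,2k} < √(8/33). Then there exist constants C₁, C₂ > 0 depending only on δ_{2s,2k} such that: for any x ∈ ℂ^N, c ∈ ℂ^m, y ∈ ℂ^m and ε > 0 with ‖Ax + c − y‖₂ ≤ ε, and any minimizer (x̂, ĉ) of ‖z‖₁ + √(s/k)·‖d‖₁ over pairs (z,d) subject to ‖Az + d − y‖₂ ≤ ε, one has ‖x − x̂‖₁ + √(s/k)·‖c − ĉ‖₁ ≤ C₁·(σ_s(x)₁ + √(s/k)·σ_k(c)₁) + C₂·√(2s)·ε. -/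

import Mathlib

open Finset Matrix MeasureTheory

noncomputable def l1norm {n : ℕ} (x : Fin n → ℂ) : ℝ := ∑ i, ‖x i‖

noncomputable def l2norm {n : ℕ} (x : Fin n → ℂ) : ℝ := Real.sqrt (∑ i, ‖x i‖ ^ 2)

/-- The vector equal to `x` on `S` and zero elsewhere. -/
def restr {n : ℕ} (x : Fin n → ℂ) (S : Finset (Fin n)) : Fin n → ℂ :=
  fun i => if i ∈ S then x i else 0

/-- `x` has at most `s` nonzero entries. -/
def IsSparse {n : ℕ} (s : ℕ) (x : Fin n → ℂ) : Prop :=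
  ∃ S : Finset (Fin n), S.card ≤ s ∧ ∀ i ∉ S, x i = 0

/-- Best `s`-term approximation error of `x` in the `ℓ¹` norm. -/
noncomputable def sigma1 {n : ℕ} (s : ℕ) (x : Fin n → ℂ) : ℝ :=
  sInf {t : ℝ | ∃ z : Fin n → ℂ, IsSparse s z ∧ t = l1norm (x - z)}

/-- `η_{s,k}(λ) = (s + λ²k)/min{s, λ²k}`. -/
noncomputable def etaSK (s k : ℕ) (lam : ℝ) : ℝ :=
  ((s : ℝ) + lam ^ 2 * k) / min (s : ℝ) (lam ^ 2 * k)

/-- The ℓ¹-robust null space property of order (s,k) with weight lam, constants ρ, τ. -/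
def L1RNSP {m N : ℕ} (A : Matrix (Fin m) (Fin N) ℂ) (s k : ℕ) (lam ρ τ : ℝ) : Prop :=
  ∀ (x : Fin N → ℂ) (c : Fin m → ℂ) (S : Finset (Fin N)) (T : Finset (Fin m)),
    S.card ≤ s → T.card ≤ k →
      l1norm (restr x S) + lam * l1norm (restr c T) ≤
        ρ * (l1norm (restr x Sᶜ) + lam * l1norm (restr c Tᶜ)) + τ * l2norm (A.mulVec x + c)

/-- The ℓ²-robust null space property of order (s,k) with weight lam, constants ρ, τ. -/
def L2RNSP {m N : ℕ} (A : Matrix (Fin m) (Fin N) ℂ) (s k : ℕ) (lam ρ τ : ℝ) : Prop :=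
  ∀ (x : Fin N → ℂ) (c : Fin m → ℂ) (S : Finset (Fin N)) (T : Finset (Fin m)),
    S.card ≤ s → T.card ≤ k →
      Real.sqrt (l2norm (restr x S) ^ 2 + l2norm (restr c T) ^ 2) ≤
        (ρ / Real.sqrt ((s : ℝ) + lam ^ 2 * k)) *
            (l1norm (restr x Sᶜ) + lam * l1norm (restr c Tᶜ)) +
          τ * l2norm (A.mulVec x + c)

/-- `A` satisfies the two-sided RIP inequality for the sparse corruptions problem of
order `(s,k)` with constant `δ`. -/
def RIPCor {m N : ℕ} (A : Matrix (Fin m) (Fin N) ℂ) (s k : ℕ) (δ : ℝ) : Prop :=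
  ∀ (x : Fin N → ℂ) (c : Fin m → ℂ), IsSparse s x → IsSparse k c →
    (1 - δ) * (l2norm x ^ 2 + l2norm c ^ 2) ≤ l2norm (A.mulVec x + c) ^ 2 ∧
      l2norm (A.mulVec x + c) ^ 2 ≤ (1 + δ) * (l2norm x ^ 2 + l2norm c ^ 2)

/-- `A` satisfies the RIP inequality for sparse vectors of order `s` with constant `δ`. -/
def RIPSparse {m N : ℕ} (A : Matrix (Fin m) (Fin N) ℂ) (s : ℕ) (δ : ℝ) : Prop :=
  ∀ x : Fin N → ℂ, IsSparse s x →
    (1 - δ) * l2norm x ^ 2 ≤ l2norm (A.mulVec x) ^ 2 ∧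
      l2norm (A.mulVec x) ^ 2 ≤ (1 + δ) * l2norm x ^ 2

/-- `(xh, ch)` is a minimizer of `‖z‖₁ + lam ‖d‖₁` subject to `‖Az + d - y‖₂ ≤ ε`. -/
def IsMinimizer {m N : ℕ} (A : Matrix (Fin m) (Fin N) ℂ) (y : Fin m → ℂ) (lam ε : ℝ)
    (xh : Fin N → ℂ) (ch : Fin m → ℂ) : Prop :=
  l2norm (A.mulVec xh + ch - y) ≤ ε ∧
    ∀ (z : Fin N → ℂ) (d : Fin m → ℂ), l2norm (A.mulVec z + d - y) ≤ ε →
      l1norm xh + lam * l1norm ch ≤ l1norm z + lam * l1norm d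

/-- Spectral norm of a matrix (operator norm w.r.t. Euclidean norms). -/
noncomputable def specNorm {a b : ℕ} (B : Matrix (Fin a) (Fin b) ℂ) : ℝ :=
  ‖LinearMap.toContinuousLinearMap (Matrix.toEuclideanLin B)‖

/-- `σ_{s,k}(A)`: the maximum spectral norm over `k × s` submatrices of `A`. -/
noncomputable def sigmaSK {m N : ℕ} (A : Matrix (Fin m) (Fin N) ℂ) (s k : ℕ) : ℝ :=
  sSup {t : ℝ | ∃ (S : Finset (Fin N)) (T : Finset (Fin m)) (hS : S.card = s) (hT : T.card = k),
    t = specNorm (A.submatrix (fun i : Fin k => ((T.orderIsoOfFin hT i : Fin m)))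
      (fun j : Fin s => ((S.orderIsoOfFin hS j : Fin N))))}

/-!
The estimate follows in the standard way from the `ℓ¹`-robust null space property of order
`(s, k)` with weight `√(s/k)`; the work is to derive that property from the RIP.

Write `A(x, c) = A x + c` and `(h, e) = u + Σ wⱼ`, where `u` keeps the `s` resp. `k` largest
entries of `h` and `e` and the `wⱼ` cut the remaining entries, in decreasing order, into blocks
of `s` resp. `k`.
Testing the RIP on `u + μ w` for all `μ ∈ ℂ` bounds `|⟪Au, Aw⟫|` for disjoint sparse `w` by
how far `‖Au‖²` lies from the ends of `[(1 - δ)‖u‖², (1 + δ)‖u‖²]`. Inserted into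
`‖Au‖² = ⟪Au, A(h, e)⟫ - Σ ⟪Au, Awⱼ⟫`, this gives
`√(1 - δ) ‖u‖ ≤ ‖A(h, e)‖ + δ / √(1 + δ) · Σ ‖wⱼ‖`, and the shifting inequality bounds
`Σ ‖wⱼ‖` by the weighted `ℓ¹` norm of the tail over `√s` plus `√2 ‖u‖ / 4`. The resulting
null space constant is below `1` exactly when `δ² < 8/33`.
-/

section Norms

variable {n : ℕ}

lemma l2norm_nonneg (x : Fin n → ℂ) : 0 ≤ l2norm x := Real.sqrt_nonneg _

lemma l2norm_eq_norm_toLp (x : Fin n → ℂ) : l2norm x = ‖WithLp.toLp 2 x‖ := by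
  rw [l2norm, EuclideanSpace.norm_eq]

lemma l2norm_sq (x : Fin n → ℂ) : l2norm x ^ 2 = ∑ i, ‖x i‖ ^ 2 :=
  Real.sq_sqrt (by positivity)

lemma l2norm_sub_le (x y : Fin n → ℂ) : l2norm (x - y) ≤ l2norm x + l2norm y := by
  simpa only [l2norm_eq_norm_toLp, WithLp.toLp_sub] using norm_sub_le _ _

lemma norm_restr (x : Fin n → ℂ) (S : Finset (Fin n)) (i : Fin n) :
    ‖restr x S i‖ = if i ∈ S then ‖x i‖ else 0 := by
  unfold restr; split_ifs <;> simp

lemma l1norm_restr (x : Fin n → ℂ) (S : Finset (Fin n)) :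
    l1norm (restr x S) = ∑ i ∈ S, ‖x i‖ := by
  simp only [l1norm, norm_restr, Finset.sum_ite_mem, Finset.univ_inter]

lemma l2norm_restr (x : Fin n → ℂ) (S : Finset (Fin n)) :
    l2norm (restr x S) = √(∑ i ∈ S, ‖x i‖ ^ 2) := by
  simp only [l2norm, norm_restr, ite_pow, zero_pow two_ne_zero, Finset.sum_ite_mem,
    Finset.univ_inter]

lemma restr_add_restr_compl (x : Fin n → ℂ) (S : Finset (Fin n)) :
    restr x S + restr x Sᶜ = x := by
  ext i; by_cases hi : i ∈ S <;> simp [restr, hi]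

lemma l1norm_eq_restr_add_restr_compl (x : Fin n → ℂ) (S : Finset (Fin n)) :
    l1norm x = l1norm (restr x S) + l1norm (restr x Sᶜ) := by
  rw [l1norm_restr, l1norm_restr, l1norm, Finset.sum_add_sum_compl]

lemma l1norm_sub_ge (x y : Fin n → ℂ) (S : Finset (Fin n)) :
    l1norm (restr x S) - l1norm (restr y S) + l1norm (restr y Sᶜ) - l1norm (restr x Sᶜ) ≤
      l1norm (x - y) := by
  have hS : ∑ i ∈ S, (‖x i‖ - ‖y i‖) ≤ ∑ i ∈ S, ‖(x - y) i‖ :=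
    Finset.sum_le_sum fun i _ => norm_sub_norm_le _ _
  have hSc : ∑ i ∈ Sᶜ, (‖y i‖ - ‖x i‖) ≤ ∑ i ∈ Sᶜ, ‖(x - y) i‖ :=
    Finset.sum_le_sum fun i _ => (norm_sub_norm_le _ _).trans_eq (norm_sub_rev _ _)
  rw [Finset.sum_sub_distrib] at hS hSc
  rw [l1norm_eq_restr_add_restr_compl (x - y) S]
  simp only [l1norm_restr]
  linarith

lemma isSparse_restr (x : Fin n → ℂ) {S : Finset (Fin n)} {s : ℕ} (hS : S.card ≤ s) :
    IsSparse s (restr x S) :=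
  ⟨S, hS, fun _ hi => if_neg hi⟩

lemma isSparse_zero (s : ℕ) : IsSparse s (0 : Fin n → ℂ) :=
  ⟨∅, by simp, fun _ _ => rfl⟩

lemma restr_eq_zero_or_restr_eq_zero (x : Fin n → ℂ) {S T : Finset (Fin n)} (hST : Disjoint S T)
    (i : Fin n) : restr x S i = 0 ∨ restr x T i = 0 := by
  by_cases hi : i ∈ S
  · exact Or.inr (if_neg (Finset.disjoint_left.1 hST hi))
  · exact Or.inl (if_neg hi)

lemma IsSparse.mono {s t : ℕ} {x : Fin n → ℂ} (hx : IsSparse s x) (hst : s ≤ t) : IsSparse t x :=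
  let ⟨S, hS, hxS⟩ := hx
  ⟨S, hS.trans hst, hxS⟩

lemma IsSparse.add_smul {s t : ℕ} {x y : Fin n → ℂ} (hx : IsSparse s x) (hy : IsSparse t y)
    (μ : ℂ) : IsSparse (s + t) (x + μ • y) := by
  obtain ⟨S, hS, hxS⟩ := hx
  obtain ⟨T, hT, hyT⟩ := hy
  refine ⟨S ∪ T, (Finset.card_union_le _ _).trans (add_le_add hS hT), fun i hi => ?_⟩
  rw [Finset.mem_union, not_or] at hi
  simp [hxS i hi.1, hyT i hi.2]

lemma l2norm_add_smul_sq_of_disjoint {x y : Fin n → ℂ} (hxy : ∀ i, x i = 0 ∨ y i = 0) (μ : ℂ) :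
    l2norm (x + μ • y) ^ 2 = l2norm x ^ 2 + ‖μ‖ ^ 2 * l2norm y ^ 2 := by
  simp only [l2norm_sq, Finset.mul_sum, ← Finset.sum_add_distrib]
  refine Finset.sum_congr rfl fun i _ => ?_
  rcases hxy i with h | h <;> simp [h, mul_pow]

lemma l1norm_restr_le_sqrt_mul_l2norm_restr (x : Fin n → ℂ) {S : Finset (Fin n)} {s : ℕ}
    (hS : S.card ≤ s) : l1norm (restr x S) ≤ √s * l2norm (restr x S) := by
  rw [l1norm_restr, l2norm_restr, ← Real.sqrt_mul (Nat.cast_nonneg _)]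
  refine Real.le_sqrt_of_sq_le ((sq_sum_le_card_mul_sum_sq).trans ?_)
  gcongr

end Norms

section Largest

variable {ι : Type*} [DecidableEq ι]

lemma exists_subset_card_eq_forall_le (f : ι → ℝ) {U : Finset ι} {t : ℕ} (ht : t ≤ U.card) :
    ∃ V ⊆ U, V.card = t ∧ ∀ i ∈ V, ∀ j ∈ U \ V, f j ≤ f i := by
  obtain ⟨V, hV, hmax⟩ := (U.powersetCard t).exists_max_image (fun V => ∑ i ∈ V, f i)
    (Finset.powersetCard_nonempty.2 ht)
  rw [Finset.mem_powersetCard] at hV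
  refine ⟨V, hV.1, hV.2, fun i hi j hj => le_of_not_gt fun hij => ?_⟩
  rw [Finset.mem_sdiff] at hj
  have hj' : j ∉ V.erase i := fun h => hj.2 (Finset.mem_of_mem_erase h)
  have hswap : insert j (V.erase i) ∈ U.powersetCard t := by
    rw [Finset.mem_powersetCard, Finset.card_insert_of_notMem hj',
      Finset.card_erase_of_mem hi, ← hV.2, Nat.sub_add_cancel (Finset.card_pos.2 ⟨i, hi⟩)]
    exact ⟨Finset.insert_subset hj.1 ((Finset.erase_subset _ _).trans hV.1), rfl⟩
  have := hmax _ hswap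
  rw [Finset.sum_insert hj', ← Finset.add_sum_erase V f hi] at this
  linarith

lemma sum_le_sum_of_forall_le {f : ι → ℝ} (hf : ∀ i, 0 ≤ f i) {S V : Finset ι}
    (hcard : S.card ≤ V.card) (hV : ∀ i ∈ V, ∀ j ∉ V, f j ≤ f i) :
    ∑ i ∈ S, f i ≤ ∑ i ∈ V, f i := by
  have hcard' : (S \ V).card ≤ (V \ S).card := by
    have := Finset.card_sdiff_add_card_inter S V
    have := Finset.card_sdiff_add_card_inter V S
    rw [Finset.inter_comm] at this
    omega
  have htail : ∑ i ∈ S \ V, f i ≤ ∑ i ∈ V \ S, f i := by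
    rcases (V \ S).eq_empty_or_nonempty with hVS | hVS
    · rw [hVS, Finset.card_empty, Nat.le_zero, Finset.card_eq_zero] at hcard'
      simp [hcard', hVS]
    obtain ⟨j, hj, hjmin⟩ := (V \ S).exists_min_image f hVS
    calc ∑ i ∈ S \ V, f i ≤ (S \ V).card • f j :=
          Finset.sum_le_card_nsmul _ _ _ fun i hi =>
            hV j (Finset.mem_sdiff.1 hj).1 i (Finset.mem_sdiff.1 hi).2
      _ ≤ (V \ S).card • f j := nsmul_le_nsmul_left (hf j) hcard'
      _ ≤ ∑ i ∈ V \ S, f i := Finset.card_nsmul_le_sum _ _ _ hjmin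
  rw [← Finset.sum_inter_add_sum_sdiff S V, ← Finset.sum_inter_add_sum_sdiff V S,
    Finset.inter_comm]
  linarith

end Largest

section LargestEntries

variable {n : ℕ}

lemma exists_card_eq_forall_norm_le (x : Fin n → ℂ) {t : ℕ} (ht : t ≤ n) :
    ∃ V : Finset (Fin n), V.card = t ∧ ∀ i ∈ V, ∀ j ∉ V, ‖x j‖ ≤ ‖x i‖ := by
  obtain ⟨V, -, hV, hmax⟩ := exists_subset_card_eq_forall_le (fun i => ‖x i‖)
    (U := Finset.univ) (by simpa using ht)
  exact ⟨V, hV, fun i hi j hj => hmax i hi j (by simpa using hj)⟩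

variable {x : Fin n → ℂ} {S V : Finset (Fin n)}

lemma l2norm_restr_le_of_forall_norm_le (hcard : S.card ≤ V.card)
    (hV : ∀ i ∈ V, ∀ j ∉ V, ‖x j‖ ≤ ‖x i‖) : l2norm (restr x S) ≤ l2norm (restr x V) := by
  rw [l2norm_restr, l2norm_restr]
  exact Real.sqrt_le_sqrt <| sum_le_sum_of_forall_le (fun _ => by positivity) hcard
    fun i hi j hj => pow_le_pow_left₀ (norm_nonneg _) (hV i hi j hj) 2

lemma l1norm_restr_compl_le_of_forall_norm_le (hcard : S.card ≤ V.card)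
    (hV : ∀ i ∈ V, ∀ j ∉ V, ‖x j‖ ≤ ‖x i‖) :
    l1norm (restr x Vᶜ) ≤ l1norm (restr x Sᶜ) := by
  have := sum_le_sum_of_forall_le (fun i => norm_nonneg (x i)) hcard hV
  have := l1norm_eq_restr_add_restr_compl x S
  have := l1norm_eq_restr_add_restr_compl x V
  simp only [l1norm_restr] at *
  linarith

lemma sqrt_card_mul_norm_le_l2norm_restr {i : Fin n} (hi : ∀ j ∈ V, ‖x i‖ ≤ ‖x j‖) :
    √V.card * ‖x i‖ ≤ l2norm (restr x V) := by
  rw [l2norm_restr, ← Real.sqrt_sq (norm_nonneg (x i)), ← Real.sqrt_mul (Nat.cast_nonneg _)]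
  refine Real.sqrt_le_sqrt ?_
  rw [← nsmul_eq_mul]
  exact Finset.card_nsmul_le_sum _ _ _ fun j hj => pow_le_pow_left₀ (norm_nonneg _) (hi j hj) 2

lemma l1norm_restr_compl_le_l1norm_sub {s : ℕ} {z : Fin n → ℂ} (hz : IsSparse s z)
    (hV : ∀ i ∈ V, ∀ j ∉ V, ‖x j‖ ≤ ‖x i‖) (hs : min s n ≤ V.card) :
    l1norm (restr x Vᶜ) ≤ l1norm (x - z) := by
  obtain ⟨Z, hZ, hzZ⟩ := hz
  have hZV : Z.card ≤ V.card :=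
    (le_min hZ (by simpa using Finset.card_le_univ Z)).trans hs
  refine (l1norm_restr_compl_le_of_forall_norm_le hZV hV).trans ?_
  rw [l1norm_restr, l1norm]
  calc ∑ i ∈ Zᶜ, ‖x i‖ = ∑ i ∈ Zᶜ, ‖(x - z) i‖ :=
        Finset.sum_congr rfl fun i hi => by simp [hzZ i (Finset.mem_compl.1 hi)]
    _ ≤ ∑ i, ‖(x - z) i‖ :=
        Finset.sum_le_sum_of_subset_of_nonneg (Finset.subset_univ _) fun _ _ _ => norm_nonneg _

lemma exists_card_le_l1norm_restr_compl_le_sigma1 (x : Fin n → ℂ) (s : ℕ) :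
    ∃ V : Finset (Fin n), V.card ≤ s ∧ l1norm (restr x Vᶜ) ≤ sigma1 s x := by
  obtain ⟨V, hV, hmax⟩ := exists_card_eq_forall_norm_le x (min_le_right s n)
  refine ⟨V, hV.trans_le (min_le_left _ _), le_csInf ⟨_, 0, isSparse_zero s, rfl⟩ ?_⟩
  rintro _ ⟨z, hz, rfl⟩
  exact l1norm_restr_compl_le_l1norm_sub hz hmax hV.ge

end LargestEntries

section Blocks

lemma sqrt_sum_sq_le_of_mem_Icc {ι : Type*} {F : Finset ι} {f : ι → ℝ} {s : ℕ} (hs : 1 ≤ s)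
    {a b : ℝ} (ha : 0 ≤ a) (hab : a ≤ b) (hf : ∀ i ∈ F, a ≤ f i ∧ f i ≤ b)
    (hcase : a = 0 ∨ F.card = s) :
    √(∑ i ∈ F, f i ^ 2) ≤ (∑ i ∈ F, f i) / √s + √s * (b - a) / 4 := by
  have hs' : (0 : ℝ) < s := by exact_mod_cast hs
  set S₁ := ∑ i ∈ F, f i
  have hsq : ∑ i ∈ F, f i ^ 2 ≤ (b + a) * S₁ - F.card * (b * a) := by
    calc ∑ i ∈ F, f i ^ 2 ≤ ∑ i ∈ F, ((b + a) * f i - b * a) :=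
          Finset.sum_le_sum fun i hiF => by nlinarith [hf i hiF]
      _ = (b + a) * S₁ - F.card * (b * a) := by
          rw [Finset.sum_sub_distrib, ← Finset.mul_sum, Finset.sum_const, nsmul_eq_mul]
  have hcard' : (s : ℝ) * (b * a) ≤ F.card * (b * a) := by
    rcases hcase with rfl | h
    · simp
    · rw [h]
  have hS₁ : 0 ≤ S₁ := Finset.sum_nonneg fun i hiF => ha.trans (hf i hiF).1
  have hkey : s * ∑ i ∈ F, f i ^ 2 ≤ (S₁ + s * (b - a) / 4) ^ 2 := by
    nlinarith [sq_nonneg (S₁ - s * (b + 3 * a) / 4), mul_nonneg (mul_nonneg hs'.le hs'.le)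
      (mul_nonneg ha (sub_nonneg.2 hab))]
  have hr : √(s : ℝ) ^ 2 = s := Real.sq_sqrt hs'.le
  have hr' : 0 < √(s : ℝ) := Real.sqrt_pos.2 hs'
  rw [Real.sqrt_le_left (by positivity), div_add' _ _ _ hr'.ne', div_pow,
    le_div_iff₀ (by positivity)]
  have hshift : √(s : ℝ) * (b - a) / 4 * √s = s * (b - a) / 4 := by
    linear_combination (b - a) / 4 * hr
  rwa [hshift, hr, mul_comm]

variable {n : ℕ} (x : Fin n → ℂ) {s : ℕ}

lemma restr_add_restr_sdiff {U V : Finset (Fin n)} (hVU : V ⊆ U) :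
    restr x V + restr x (U \ V) = restr x U := by
  ext i
  by_cases hV : i ∈ V
  · simp [restr, hV, hVU hV]
  · by_cases hU : i ∈ U <;> simp [restr, hV, hU]

lemma exists_blocks (hs : 1 ≤ s) (U : Finset (Fin n)) {μ : ℝ} (hμ : 0 ≤ μ)
    (hU : ∀ i ∈ U, ‖x i‖ ≤ μ) :
    ∃ 𝓑 : Finset (Finset (Fin n)), (∀ B ∈ 𝓑, B.card ≤ s ∧ B ⊆ U) ∧
      ∑ B ∈ 𝓑, restr x B = restr x U ∧
      ∑ B ∈ 𝓑, l2norm (restr x B) ≤ l1norm (restr x U) / √s + √s * μ / 4 := by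
  induction U using Finset.strongInduction generalizing μ with
  | _ U ih =>
  by_cases hUs : U.card ≤ s
  · refine ⟨{U}, by simpa using hUs, by simp, ?_⟩
    rw [Finset.sum_singleton, l2norm_restr, l1norm_restr, ← sub_zero μ]
    exact sqrt_sum_sq_le_of_mem_Icc hs le_rfl hμ (fun i hi => ⟨norm_nonneg _, hU i hi⟩)
      (Or.inl rfl)
  obtain ⟨V, hVU, hV, hmax⟩ := exists_subset_card_eq_forall_le (fun i => ‖x i‖) (not_le.1 hUs).le
  have hVne : V.Nonempty := Finset.card_pos.1 (by omega)
  obtain ⟨j, hj, hjmin⟩ := V.exists_min_image (fun i => ‖x i‖) hVne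
  obtain ⟨𝓑, h𝓑, hsum, hnorm⟩ := ih (U \ V) (Finset.sdiff_ssubset hVU hVne) (norm_nonneg (x j))
    fun i hi => hmax j hj i hi
  have hV𝓑 : V ∉ 𝓑 := fun h => by
    obtain ⟨i, hi⟩ := hVne
    exact (Finset.mem_sdiff.1 ((h𝓑 V h).2 hi)).2 hi
  refine ⟨insert V 𝓑, ?_, ?_, ?_⟩
  · simp only [Finset.mem_insert, forall_eq_or_imp]
    exact ⟨⟨hV.le, hVU⟩, fun B hB => ⟨(h𝓑 B hB).1, (h𝓑 B hB).2.trans Finset.sdiff_subset⟩⟩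
  · rw [Finset.sum_insert hV𝓑, hsum, restr_add_restr_sdiff x hVU]
  · have hfirst := sqrt_sum_sq_le_of_mem_Icc (f := fun i => ‖x i‖) hs (norm_nonneg (x j))
      (hU j (hVU hj)) (fun i hi => ⟨hjmin i hi, hU i (hVU hi)⟩) (Or.inr hV)
    have hsplit := Finset.sum_sdiff hVU (f := fun i => ‖x i‖)
    rw [Finset.sum_insert hV𝓑, l2norm_restr]
    rw [l1norm_restr] at hnorm ⊢
    rw [← hsplit, add_div]
    linarith

lemma exists_blocks_of_forall_norm_le (hs : 1 ≤ s) {V : Finset (Fin n)} (hV : V.card = s)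
    (hmax : ∀ i ∈ V, ∀ j ∉ V, ‖x j‖ ≤ ‖x i‖) :
    ∃ 𝓑 : Finset (Finset (Fin n)), (∀ B ∈ 𝓑, B.card ≤ s ∧ Disjoint B V) ∧
      ∑ B ∈ 𝓑, restr x B = restr x Vᶜ ∧
      ∑ B ∈ 𝓑, l2norm (restr x B) ≤ l1norm (restr x Vᶜ) / √s + l2norm (restr x V) / 4 := by
  have hr : 0 < √(s : ℝ) := Real.sqrt_pos.2 (by exact_mod_cast hs)
  obtain ⟨𝓑, h𝓑, hsum, hnorm⟩ := exists_blocks x hs Vᶜ (μ := l2norm (restr x V) / √s)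
    (div_nonneg (l2norm_nonneg _) hr.le) fun i hi => by
      rw [le_div_iff₀' hr, ← hV]
      exact sqrt_card_mul_norm_le_l2norm_restr fun j hj => hmax j hj i (Finset.mem_compl.1 hi)
  refine ⟨𝓑, fun B hB => ⟨(h𝓑 B hB).1, Finset.subset_compl_iff_disjoint_right.1 (h𝓑 B hB).2⟩,
    hsum, hnorm.trans_eq ?_⟩
  rw [mul_div_cancel₀ _ hr.ne']

end Blocks

section InnerProduct

variable {E : Type*} [NormedAddCommGroup E] [InnerProductSpace ℂ E]

lemma norm_add_smul_sq_conj_inner (u w : E) (t : ℝ) :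
    ‖u + ((t : ℂ) * starRingEnd ℂ (inner ℂ u w)) • w‖ ^ 2 =
      ‖u‖ ^ 2 + 2 * t * ‖inner ℂ u w‖ ^ 2 + t ^ 2 * ‖inner ℂ u w‖ ^ 2 * ‖w‖ ^ 2 := by
  rw [@norm_add_sq ℂ, inner_smul_right, norm_smul, norm_mul, Complex.norm_real, Complex.norm_conj,
    mul_assoc, Complex.conj_mul', Real.norm_eq_abs]
  norm_cast
  rw [RCLike.re_to_complex, Complex.ofReal_re, mul_pow, mul_pow, sq_abs]
  ring

lemma norm_inner_sq_mul_le_of_forall {u w : E} {δ a b : ℝ} (hb : 0 ≤ b)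
    (h : ∀ μ : ℂ, (1 - δ) * (a + ‖μ‖ ^ 2 * b) ≤ ‖u + μ • w‖ ^ 2 ∧
      ‖u + μ • w‖ ^ 2 ≤ (1 + δ) * (a + ‖μ‖ ^ 2 * b)) :
    ‖inner ℂ u w‖ ^ 2 * a ≤ (‖u‖ ^ 2 - (1 - δ) * a) * ((1 + δ) * a - ‖u‖ ^ 2) * b := by
  set g := ‖inner ℂ u w‖ ^ 2
  have hμ (t : ℝ) : ‖(t : ℂ) * starRingEnd ℂ (inner ℂ u w)‖ ^ 2 = t ^ 2 * g := by
    rw [norm_mul, Complex.norm_real, Complex.norm_conj, Real.norm_eq_abs, mul_pow, sq_abs]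
  have hp₁ : 0 ≤ ‖u‖ ^ 2 - (1 - δ) * a := by simpa using (h 0).1
  have hq₁ : 0 ≤ (1 + δ) * a - ‖u‖ ^ 2 := by simpa using (h 0).2
  -- for `μ = t * conj ⟪u, w⟫` both bounds are quadratic inequalities in the real `t`,
  -- so the two discriminants are nonpositive
  have hlow := discrim_le_zero (a := g * (‖w‖ ^ 2 - (1 - δ) * b)) (b := 2 * g)
    (c := ‖u‖ ^ 2 - (1 - δ) * a) fun t => by
      have := (h (t * starRingEnd ℂ (inner ℂ u w))).1
      rw [norm_add_smul_sq_conj_inner, hμ] at this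
      linarith
  have hupp := discrim_le_zero (a := g * ((1 + δ) * b - ‖w‖ ^ 2)) (b := -(2 * g))
    (c := (1 + δ) * a - ‖u‖ ^ 2) fun t => by
      have := (h (t * starRingEnd ℂ (inner ℂ u w))).2
      rw [norm_add_smul_sq_conj_inner, hμ] at this
      linarith
  rw [discrim] at hlow hupp
  rcases (sq_nonneg _ : 0 ≤ g).eq_or_lt with hg | hg
  · rw [show g = 0 from hg.symm, zero_mul]; exact mul_nonneg (mul_nonneg hp₁ hq₁) hb
  have hlow' : g ≤ (‖u‖ ^ 2 - (1 - δ) * a) * (‖w‖ ^ 2 - (1 - δ) * b) := by nlinarith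
  have hupp' : g ≤ ((1 + δ) * a - ‖u‖ ^ 2) * ((1 + δ) * b - ‖w‖ ^ 2) := by nlinarith
  have hcomb : δ * (g * a) ≤ δ * ((‖u‖ ^ 2 - (1 - δ) * a) * ((1 + δ) * a - ‖u‖ ^ 2) * b) := by
    linear_combination (add_le_add (mul_le_mul_of_nonneg_left hlow' hq₁)
      (mul_le_mul_of_nonneg_left hupp' hp₁)) / 2
  rcases lt_trichotomy δ 0 with hδ | rfl | hδ
  · nlinarith [mul_nonneg (mul_nonneg hp₁ hq₁) hb]
  · nlinarith
  · exact le_of_mul_le_mul_left hcomb hδ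

lemma neg_mul_sum_le_re_inner_sum {ι : Type*} {u : E} {K : Finset ι} {v : ι → E} {f : ι → ℝ}
    {κ : ℝ} (h : ∀ i ∈ K, ‖inner ℂ u (v i)‖ ≤ κ * f i) :
    -(κ * ∑ i ∈ K, f i) ≤ (inner ℂ u (∑ i ∈ K, v i)).re := by
  rw [inner_sum, Complex.re_sum, Finset.mul_sum, ← Finset.sum_neg_distrib]
  exact Finset.sum_le_sum fun i hi =>
    (neg_le_neg (h i hi)).trans (abs_le.1 (Complex.abs_re_le_norm _)).1

lemma sq_norm_le_mul_norm_add_sum {ι ι' : Type*} {u : E} {I : Finset ι} {J : Finset ι'}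
    {v : ι → E} {v' : ι' → E} {f : ι → ℝ} {f' : ι' → ℝ} {κ : ℝ}
    (h : ∀ i ∈ I, ‖inner ℂ u (v i)‖ ≤ κ * f i) (h' : ∀ j ∈ J, ‖inner ℂ u (v' j)‖ ≤ κ * f' j) :
    ‖u‖ ^ 2 ≤ ‖u‖ * ‖u + (∑ i ∈ I, v i + ∑ j ∈ J, v' j)‖ +
      κ * (∑ i ∈ I, f i + ∑ j ∈ J, f' j) := by
  have hCS := re_inner_le_norm (𝕜 := ℂ) u (u + (∑ i ∈ I, v i + ∑ j ∈ J, v' j))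
  rw [inner_add_right, inner_add_right, map_add, map_add, inner_self_eq_norm_sq,
    RCLike.re_to_complex, RCLike.re_to_complex] at hCS
  linarith [neg_mul_sum_le_re_inner_sum h, neg_mul_sum_le_re_inner_sum h']

end InnerProduct

section Scalar

lemma le_add_mul_of_sq_le_mul_add {r P G W κ θ : ℝ} (hG : 0 ≤ G) (hW : 0 ≤ W) (hθ : 0 ≤ θ)
    (hrP : r ≤ P) (hrκ : r * κ ≤ θ * P ^ 2) (hP : P ^ 2 ≤ P * G + κ * W) : r ≤ G + θ * W := by
  by_contra! hlt
  have hP0 : 0 < P := by nlinarith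
  have h₁ : P * (P - r) < W * (κ - θ * P) := by nlinarith
  have h₂ : 0 < κ - θ * P := by
    by_contra! h
    nlinarith [mul_nonneg hP0.le (sub_nonneg.2 hrP), mul_nonpos_of_nonneg_of_nonpos hW h]
  nlinarith [mul_lt_mul_of_pos_right (show θ * W < r by nlinarith) h₂,
    mul_le_mul_of_nonneg_left h₁.le hθ]

lemma sqrt_one_sub_mul_sqrt_le {δ a P : ℝ} (hδ0 : 0 ≤ δ) (hδ1 : δ ≤ 1) :
    √(1 - δ) * √((P ^ 2 - (1 - δ) * a) * ((1 + δ) * a - P ^ 2)) ≤ δ / √(1 + δ) * P ^ 2 := by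
  rw [div_mul_eq_mul_div, le_div_iff₀ (Real.sqrt_pos.2 (by linarith)),
    ← Real.sqrt_mul (by linarith), ← Real.sqrt_mul' _ (by linarith),
    Real.sqrt_le_left (by positivity)]
  -- `(δ P²)² - (1 - δ²) (P² - (1 - δ) a) ((1 + δ) a - P²) = (P² - (1 - δ²) a)²`
  nlinarith [sq_nonneg (P ^ 2 - (1 - δ ^ 2) * a)]

lemma add_le_sqrt_two_mul_sqrt (a b : ℝ) : a + b ≤ √2 * √(a ^ 2 + b ^ 2) := by
  rw [← Real.sqrt_mul zero_le_two]
  exact Real.le_sqrt_of_sq_le add_sq_le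

lemma sqrt_div_mul_sqrt (s : ℝ) {k : ℝ} (hk : 0 < k) : √(s / k) * √k = √s := by
  rw [← Real.sqrt_mul' _ hk.le, div_mul_cancel₀ _ hk.ne']

end Scalar

section RIP

variable {m N : ℕ} {A : Matrix (Fin m) (Fin N) ℂ} {δ : ℝ}

lemma RIPCor.norm_inner_mul_sqrt_le {s s' k k' : ℕ} (hrip : RIPCor A (s + s') (k + k') δ)
    {x x' : Fin N → ℂ} {c c' : Fin m → ℂ} (hx : IsSparse s x) (hx' : IsSparse s' x')
    (hc : IsSparse k c) (hc' : IsSparse k' c') (hxx' : ∀ i, x i = 0 ∨ x' i = 0)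
    (hcc' : ∀ i, c i = 0 ∨ c' i = 0) :
    ‖inner ℂ (WithLp.toLp 2 (A *ᵥ x + c)) (WithLp.toLp 2 (A *ᵥ x' + c'))‖ *
        √(l2norm x ^ 2 + l2norm c ^ 2) ≤
      √((l2norm (A *ᵥ x + c) ^ 2 - (1 - δ) * (l2norm x ^ 2 + l2norm c ^ 2)) *
        ((1 + δ) * (l2norm x ^ 2 + l2norm c ^ 2) - l2norm (A *ᵥ x + c) ^ 2)) *
        √(l2norm x' ^ 2 + l2norm c' ^ 2) := by
  rw [← Real.sqrt_sq (norm_nonneg (inner ℂ _ _)), ← Real.sqrt_mul (sq_nonneg _),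
    ← Real.sqrt_mul' _ (by positivity)]
  refine Real.sqrt_le_sqrt ?_
  rw [l2norm_eq_norm_toLp (A *ᵥ x + c)]
  refine norm_inner_sq_mul_le_of_forall (by positivity) fun μ => ?_
  have h := hrip (x + μ • x') (c + μ • c') (hx.add_smul hx' μ) (hc.add_smul hc' μ)
  have hlin : A *ᵥ (x + μ • x') + (c + μ • c') = (A *ᵥ x + c) + μ • (A *ᵥ x' + c') := by
    rw [Matrix.mulVec_add, Matrix.mulVec_smul, smul_add]; abel
  rw [hlin, l2norm_add_smul_sq_of_disjoint hxx', l2norm_add_smul_sq_of_disjoint hcc',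
    l2norm_eq_norm_toLp (A *ᵥ x + c + μ • (A *ᵥ x' + c')), WithLp.toLp_add, WithLp.toLp_smul] at h
  constructor <;> linarith [h.1, h.2]

lemma RIPCor.sqrt_one_sub_mul_le {s k : ℕ} (hrip : RIPCor A (2 * s) (2 * k) δ) (hδ0 : 0 ≤ δ)
    (hδ1 : δ ≤ 1) {x₀ : Fin N → ℂ} {c₀ : Fin m → ℂ} (hx₀ : IsSparse s x₀) (hc₀ : IsSparse k c₀)
    {ι κ : Type*} {I : Finset ι} {J : Finset κ} {xs : ι → Fin N → ℂ} {cs : κ → Fin m → ℂ}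
    (hxs : ∀ i ∈ I, IsSparse s (xs i) ∧ ∀ j, x₀ j = 0 ∨ xs i j = 0)
    (hcs : ∀ i ∈ J, IsSparse k (cs i) ∧ ∀ j, c₀ j = 0 ∨ cs i j = 0) :
    √(1 - δ) * √(l2norm x₀ ^ 2 + l2norm c₀ ^ 2) ≤
      l2norm (A *ᵥ (x₀ + ∑ i ∈ I, xs i) + (c₀ + ∑ j ∈ J, cs j)) +
        δ / √(1 + δ) * (∑ i ∈ I, l2norm (xs i) + ∑ j ∈ J, l2norm (cs j)) := by
  set a := l2norm x₀ ^ 2 + l2norm c₀ ^ 2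
  set u := WithLp.toLp 2 (A *ᵥ x₀ + c₀)
  have hW : 0 ≤ ∑ i ∈ I, l2norm (xs i) + ∑ j ∈ J, l2norm (cs j) :=
    add_nonneg (Finset.sum_nonneg fun _ _ => l2norm_nonneg _)
      (Finset.sum_nonneg fun _ _ => l2norm_nonneg _)
  rcases (show 0 ≤ a by positivity).eq_or_lt with ha | ha
  · rw [← ha, Real.sqrt_zero, mul_zero]
    exact add_nonneg (l2norm_nonneg _) (mul_nonneg (by positivity) hW)
  have hripu := hrip x₀ c₀ (hx₀.mono (by omega)) (hc₀.mono (by omega))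
  rw [l2norm_eq_norm_toLp (A *ᵥ x₀ + c₀)] at hripu
  set κ := √((‖u‖ ^ 2 - (1 - δ) * a) * ((1 + δ) * a - ‖u‖ ^ 2)) / √a
  have hcross (x' : Fin N → ℂ) (c' : Fin m → ℂ) (hx' : IsSparse s x') (hc' : IsSparse k c')
      (hxx' : ∀ j, x₀ j = 0 ∨ x' j = 0) (hcc' : ∀ j, c₀ j = 0 ∨ c' j = 0) :
      ‖inner ℂ u (WithLp.toLp 2 (A *ᵥ x' + c'))‖ ≤ κ * √(l2norm x' ^ 2 + l2norm c' ^ 2) := by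
    have h := (two_mul s ▸ two_mul k ▸ hrip).norm_inner_mul_sqrt_le hx₀ hx' hc₀ hc' hxx' hcc'
    rw [l2norm_eq_norm_toLp (A *ᵥ x₀ + c₀)] at h
    rwa [div_mul_eq_mul_div, le_div_iff₀ (Real.sqrt_pos.2 ha)]
  have hxs' : ∀ i ∈ I, ‖inner ℂ u (WithLp.toLp 2 (A *ᵥ xs i))‖ ≤ κ * l2norm (xs i) := fun i hi => by
    simpa [l2norm, Real.sqrt_sq (l2norm_nonneg _)] using
      hcross (xs i) 0 (hxs i hi).1 (isSparse_zero k) (hxs i hi).2 (by simp)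
  have hcs' : ∀ j ∈ J, ‖inner ℂ u (WithLp.toLp 2 (cs j))‖ ≤ κ * l2norm (cs j) := fun j hj => by
    simpa [l2norm, Real.sqrt_sq (l2norm_nonneg _)] using
      hcross 0 (cs j) (isSparse_zero s) (hcs j hj).1 (by simp) (hcs j hj).2
  have hdecomp : WithLp.toLp 2 (A *ᵥ (x₀ + ∑ i ∈ I, xs i) + (c₀ + ∑ j ∈ J, cs j)) =
      u + (∑ i ∈ I, WithLp.toLp 2 (A *ᵥ xs i) + ∑ j ∈ J, WithLp.toLp 2 (cs j)) := by
    simp only [u, Matrix.mulVec_add, Matrix.mulVec_sum, WithLp.toLp_add, WithLp.toLp_sum]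
    abel
  rw [l2norm_eq_norm_toLp, hdecomp]
  refine le_add_mul_of_sq_le_mul_add (norm_nonneg _) hW (by positivity) ?_ ?_
    (sq_norm_le_mul_norm_add_sum hxs' hcs')
  · rw [← Real.sqrt_mul (by linarith), Real.sqrt_le_left (norm_nonneg _)]
    exact hripu.1
  · rw [mul_assoc, mul_div_cancel₀ _ (Real.sqrt_pos.2 ha).ne']
    exact sqrt_one_sub_mul_sqrt_le hδ0 hδ1

end RIP

noncomputable def rnspDenom (δ : ℝ) : ℝ := √(1 - δ) - √2 / 4 * (δ / √(1 + δ))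

noncomputable def rnspRho (δ : ℝ) : ℝ := √2 * (δ / √(1 + δ)) / rnspDenom δ

section NullSpace

variable {m N s k : ℕ} {A : Matrix (Fin m) (Fin N) ℂ} {δ : ℝ}

lemma RIPCor.rnspDenom_mul_le (hrip : RIPCor A (2 * s) (2 * k) δ) (hs : 1 ≤ s) (hk : 1 ≤ k)
    (hδ0 : 0 ≤ δ) (hδ1 : δ ≤ 1) {h : Fin N → ℂ} {e : Fin m → ℂ} {V : Finset (Fin N)}
    {U : Finset (Fin m)} (hV : V.card = s) (hVmax : ∀ i ∈ V, ∀ j ∉ V, ‖h j‖ ≤ ‖h i‖)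
    (hU : U.card = k) (hUmax : ∀ i ∈ U, ∀ j ∉ U, ‖e j‖ ≤ ‖e i‖) :
    rnspDenom δ * √(l2norm (restr h V) ^ 2 + l2norm (restr e U) ^ 2) ≤
      l2norm (A *ᵥ h + e) + δ / √(1 + δ) *
        ((l1norm (restr h Vᶜ) + √(s / k) * l1norm (restr e Uᶜ)) / √s) := by
  have hs' : (0 : ℝ) < s := by exact_mod_cast hs
  have hk' : (0 : ℝ) < k := by exact_mod_cast hk
  obtain ⟨𝓑, h𝓑, h𝓑sum, h𝓑norm⟩ := exists_blocks_of_forall_norm_le h hs hV hVmax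
  obtain ⟨𝓒, h𝓒, h𝓒sum, h𝓒norm⟩ := exists_blocks_of_forall_norm_le e hk hU hUmax
  have hhead := hrip.sqrt_one_sub_mul_le hδ0 hδ1 (isSparse_restr h hV.le)
    (isSparse_restr e hU.le) (xs := restr h) (cs := restr e)
    (fun B hB => ⟨isSparse_restr h (h𝓑 B hB).1,
      restr_eq_zero_or_restr_eq_zero h (h𝓑 B hB).2.symm⟩)
    (fun C hC => ⟨isSparse_restr e (h𝓒 C hC).1,
      restr_eq_zero_or_restr_eq_zero e (h𝓒 C hC).2.symm⟩)
  rw [h𝓑sum, h𝓒sum, restr_add_restr_compl, restr_add_restr_compl] at hhead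
  have hweight : l1norm (restr e Uᶜ) / √k = √(s / k) * l1norm (restr e Uᶜ) / √s := by
    rw [div_eq_div_iff (Real.sqrt_pos.2 hk').ne' (Real.sqrt_pos.2 hs').ne', mul_right_comm,
      sqrt_div_mul_sqrt _ hk', mul_comm]
  have htails := add_le_sqrt_two_mul_sqrt (l2norm (restr h V)) (l2norm (restr e U))
  have hθ : 0 ≤ δ / √(1 + δ) := by positivity
  rw [rnspDenom, add_div, sub_mul]
  nlinarith [mul_le_mul_of_nonneg_left (add_le_add h𝓑norm h𝓒norm) hθ]

theorem RIPCor.l1RNSP (hrip : RIPCor A (2 * s) (2 * k) δ) (hs : 1 ≤ s) (hsN : s ≤ N)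
    (hk : 1 ≤ k) (hkm : k ≤ m) (hδ0 : 0 ≤ δ) (hδ1 : δ ≤ 1) (hD : 0 < rnspDenom δ) :
    L1RNSP A s k √(s / k) (rnspRho δ) (√(2 * s) / rnspDenom δ) := by
  intro h e S T hS hT
  have hs' : (0 : ℝ) < s := by exact_mod_cast hs
  have hk' : (0 : ℝ) < k := by exact_mod_cast hk
  obtain ⟨V, hV, hVmax⟩ := exists_card_eq_forall_norm_le h hsN
  obtain ⟨U, hU, hUmax⟩ := exists_card_eq_forall_norm_le e hkm
  set a := √(l2norm (restr h V) ^ 2 + l2norm (restr e U) ^ 2)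
  have hcore := hrip.rnspDenom_mul_le hs hk hδ0 hδ1 hV hVmax hU hUmax
  have hhead : l1norm (restr h S) + √(s / k) * l1norm (restr e T) ≤ √(2 * s) * a := by
    have hx := (l1norm_restr_le_sqrt_mul_l2norm_restr h hS).trans
      (mul_le_mul_of_nonneg_left (l2norm_restr_le_of_forall_norm_le (hV ▸ hS) hVmax)
        (Real.sqrt_nonneg _))
    have hc := (l1norm_restr_le_sqrt_mul_l2norm_restr e hT).trans
      (mul_le_mul_of_nonneg_left (l2norm_restr_le_of_forall_norm_le (hU ▸ hT) hUmax)
        (Real.sqrt_nonneg _))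
    have hc' := mul_le_mul_of_nonneg_left hc (Real.sqrt_nonneg (s / k : ℝ))
    rw [← mul_assoc, sqrt_div_mul_sqrt _ hk'] at hc'
    calc _ ≤ √s * (l2norm (restr h V) + l2norm (restr e U)) := by linarith
      _ ≤ √s * (√2 * a) := by gcongr; exact add_le_sqrt_two_mul_sqrt _ _
      _ = √(2 * s) * a := by rw [Real.sqrt_mul zero_le_two]; ring
  have htail : l1norm (restr h Vᶜ) + √(s / k) * l1norm (restr e Uᶜ) ≤
      l1norm (restr h Sᶜ) + √(s / k) * l1norm (restr e Tᶜ) := by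
    gcongr
    · exact l1norm_restr_compl_le_of_forall_norm_le (hV ▸ hS) hVmax
    · exact l1norm_restr_compl_le_of_forall_norm_le (hU ▸ hT) hUmax
  have ha : a ≤ (l2norm (A *ᵥ h + e) + δ / √(1 + δ) *
      ((l1norm (restr h Vᶜ) + √(s / k) * l1norm (restr e Uᶜ)) / √s)) / rnspDenom δ := by
    rw [le_div_iff₀ hD, mul_comm]; exact hcore
  refine hhead.trans ((mul_le_mul_of_nonneg_left ha (Real.sqrt_nonneg _)).trans ?_)
  have hρ : 0 ≤ rnspRho δ := by unfold rnspRho; positivity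
  calc _ = rnspRho δ * (l1norm (restr h Vᶜ) + √(s / k) * l1norm (restr e Uᶜ)) +
        √(2 * s) / rnspDenom δ * l2norm (A *ᵥ h + e) := by
        rw [rnspRho, Real.sqrt_mul zero_le_two]
        field_simp
        ring
    _ ≤ _ := by gcongr

end NullSpace

section Recovery

variable {m N s k : ℕ} {A : Matrix (Fin m) (Fin N) ℂ}

theorem IsMinimizer.l1norm_sub_add_le {y : Fin m → ℂ} {lam ε ρ τ : ℝ} {x xh : Fin N → ℂ}
    {c ch : Fin m → ℂ} (hmin : IsMinimizer A y lam ε xh ch) (hnsp : L1RNSP A s k lam ρ τ)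
    (hlam : 0 ≤ lam) (hρ0 : 0 ≤ ρ) (hρ1 : ρ < 1) (hτ : 0 ≤ τ)
    (hfeas : l2norm (A *ᵥ x + c - y) ≤ ε) :
    l1norm (x - xh) + lam * l1norm (c - ch) ≤
      2 * (1 + ρ) / (1 - ρ) * (sigma1 s x + lam * sigma1 k c) + 4 * τ / (1 - ρ) * ε := by
  obtain ⟨V, hV, hσx⟩ := exists_card_le_l1norm_restr_compl_le_sigma1 x s
  obtain ⟨U, hU, hσc⟩ := exists_card_le_l1norm_restr_compl_le_sigma1 c k
  have hnsp' := hnsp (x - xh) (c - ch) V U hV hU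
  have hG : l2norm (A *ᵥ (x - xh) + (c - ch)) ≤ 2 * ε := by
    have h := l2norm_sub_le (A *ᵥ x + c - y) (A *ᵥ xh + ch - y)
    rw [show A *ᵥ x + c - y - (A *ᵥ xh + ch - y) = A *ᵥ (x - xh) + (c - ch) by
      rw [Matrix.mulVec_sub]; abel] at h
    linarith [hmin.1]
  -- minimality against the feasible `(x, c)` confines the error to a cone
  have hcone : l1norm (restr (x - xh) Vᶜ) + lam * l1norm (restr (c - ch) Uᶜ) ≤
      l1norm (restr (x - xh) V) + lam * l1norm (restr (c - ch) U) +
        2 * (l1norm (restr x Vᶜ) + lam * l1norm (restr c Uᶜ)) := by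
    have hx := l1norm_sub_ge x (x - xh) V
    have hc := mul_le_mul_of_nonneg_left (l1norm_sub_ge c (c - ch) U) hlam
    rw [sub_sub_cancel] at hx hc
    have := hmin.2 x c hfeas
    rw [l1norm_eq_restr_add_restr_compl x V, l1norm_eq_restr_add_restr_compl c U] at this
    nlinarith
  have htotal : l1norm (x - xh) + lam * l1norm (c - ch) =
      (l1norm (restr (x - xh) V) + lam * l1norm (restr (c - ch) U)) +
        (l1norm (restr (x - xh) Vᶜ) + lam * l1norm (restr (c - ch) Uᶜ)) := by
    rw [l1norm_eq_restr_add_restr_compl (x - xh) V, l1norm_eq_restr_add_restr_compl (c - ch) U]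
    ring
  have hσ := add_le_add hσx (mul_le_mul_of_nonneg_left hσc hlam)
  rw [htotal, div_mul_eq_mul_div, div_mul_eq_mul_div, ← add_div, le_div_iff₀ (by linarith)]
  nlinarith [mul_le_mul_of_nonneg_left hcone hρ0,
    mul_le_mul_of_nonneg_left hcone (sub_nonneg.2 hρ1.le),
    mul_le_mul_of_nonneg_left hσ (by linarith : 0 ≤ 1 + ρ), mul_le_mul_of_nonneg_left hG hτ]

end Recovery

lemma rnspDenom_pos_and_rnspRho_lt_one {δ : ℝ} (hδ0 : 0 ≤ δ) (hδ : δ < √(8 / 33)) :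
    0 < rnspDenom δ ∧ rnspRho δ < 1 := by
  have hδsq : δ ^ 2 < 8 / 33 := (Real.lt_sqrt hδ0).1 hδ
  have hδ1 : δ < 1 := by nlinarith
  have hθ : 0 ≤ δ / √(1 + δ) := by positivity
  have hkey : 5 / 4 * √2 * (δ / √(1 + δ)) < √(1 - δ) := by
    refine lt_of_pow_lt_pow_left₀ 2 (Real.sqrt_nonneg _) ?_
    rw [mul_pow, mul_pow, div_pow, div_pow, Real.sq_sqrt zero_le_two, Real.sq_sqrt (by linarith),
      Real.sq_sqrt (by linarith), ← sub_pos]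
    field_simp
    nlinarith
  have hD : √2 * (δ / √(1 + δ)) < rnspDenom δ := by rw [rnspDenom]; linarith
  have hD0 : 0 < rnspDenom δ := (mul_nonneg (Real.sqrt_nonneg _) hθ).trans_lt hD
  exact ⟨hD0, (div_lt_one hD0).2 hD⟩

/-- ℓ¹ recovery estimate with the theoretically optimal weight λ = √(s/k),
under δ_{2s,2k} < √(8/33), with constants depending only on δ. -/
theorem l1_recovery_optimal_lambda (δ : ℝ) (hδ0 : 0 ≤ δ) (hδ : δ < Real.sqrt (8 / 33)) :
    ∃ C₁ C₂ : ℝ, 0 < C₁ ∧ 0 < C₂ ∧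
      ∀ (N m s k : ℕ), 1 ≤ s → s ≤ N → 1 ≤ k → k ≤ m → m ≤ N →
        ∀ A : Matrix (Fin m) (Fin N) ℂ, RIPCor A (2 * s) (2 * k) δ →
          ∀ (x : Fin N → ℂ) (c y : Fin m → ℂ) (ε : ℝ), 0 < ε →
            l2norm (A.mulVec x + c - y) ≤ ε →
            ∀ (xh : Fin N → ℂ) (ch : Fin m → ℂ),
              IsMinimizer A y (Real.sqrt ((s : ℝ) / k)) ε xh ch →
              l1norm (x - xh) + Real.sqrt ((s : ℝ) / k) * l1norm (c - ch) ≤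
                C₁ * (sigma1 s x + Real.sqrt ((s : ℝ) / k) * sigma1 k c) +
                  C₂ * Real.sqrt (2 * (s : ℝ)) * ε := by
  obtain ⟨hD, hρ1⟩ := rnspDenom_pos_and_rnspRho_lt_one hδ0 hδ
  have hδ1 : δ ≤ 1 := hδ.le.trans (Real.sqrt_le_one.2 (by norm_num))
  have hρ0 : 0 ≤ rnspRho δ := by unfold rnspRho; positivity
  have hρ1' : 0 < 1 - rnspRho δ := by linarith
  refine ⟨2 * (1 + rnspRho δ) / (1 - rnspRho δ), 4 / ((1 - rnspRho δ) * rnspDenom δ),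
    by positivity, by positivity, ?_⟩
  intro N m s k hs hsN hk hkm _ A hrip x c y ε _ hfeas xh ch hmin
  have hnsp := hrip.l1RNSP hs hsN hk hkm hδ0 hδ1 hD
  refine (hmin.l1norm_sub_add_le hnsp (Real.sqrt_nonneg _) hρ0 hρ1 (by positivity)
    hfeas).trans_eq ?_
  field_simp
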